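/- arXiv:2603.18698 — 3 statements merged into one kernel-verified Lean document; each statement's English description precedes it below -/
import Mathlib

section
/- Let X1,...,Xn be i.i.d. uniform in [0,1]^{d_n}. If d_n − (2/log 2) log n → ∞, then the number of non-Pareto points n − K_{n,d_n} converges to 0 in probability; in fact E(n − K_{n,d_n}) ≤ n(n−1) 2^{−d_n} → 0. -/
/-!
Each non-Pareto point dominates some other point, so the number of non-Pareto points is at most
the number of ordered pairs `(i, j)`, `i ≠ j`, with `X_i` dominating `X_j`. For a fixed pair the
`d` coordinate comparisons are independent and each holds with probability `1/2`, so the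
expectation is at most `n (n - 1) 2^{-d}`. Since `n² 2^{-d} = exp (-log 2 (d - (2 / log 2) log n))`,
this tends to `0` under the hypothesis, and Markov's inequality gives convergence in probability.
-/

open MeasureTheory ProbabilityTheory Filter Real Finset
open scoped ENNReal

/-- Uniform distribution on the unit cube `[0,1]^d`. -/
noncomputable def cube (d : ℕ) : Measure (Fin d → ℝ) :=
  Measure.pi fun _ => volume.restrict (Set.Icc 0 1)

/-- Joint law of `n` i.i.d. points uniform in `[0,1]^d`. -/
noncomputable def sample (n d : ℕ) : Measure (Fin n → Fin d → ℝ) :=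
  Measure.pi fun _ => cube d

/-- `x` dominates `y` coordinatewise. -/
def dominates {d : ℕ} (x y : Fin d → ℝ) : Prop := ∀ k, y k ≤ x k

open scoped Classical in
/-- Number of points `X_i` dominates among the others. -/
noncomputable def domCount (n d : ℕ) (ω : Fin n → Fin d → ℝ) (i : Fin n) : ℕ :=
  (Finset.univ.filter fun j => j ≠ i ∧ dominates (ω i) (ω j)).card

open scoped Classical in
/-- Number of non-Pareto points (points dominating at least one other point). -/
noncomputable def nonParetoCount (n d : ℕ) (ω : Fin n → Fin d → ℝ) : ℕ :=
  (Finset.univ.filter fun i => 1 ≤ domCount n d ω i).card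

open scoped Classical in
/-- Number of points dominating exactly `r` other points. -/
noncomputable def layerCount (r n d : ℕ) (ω : Fin n → Fin d → ℝ) : ℕ :=
  (Finset.univ.filter fun i => domCount n d ω i = r).card

instance isProbabilityMeasure_cube (d : ℕ) : IsProbabilityMeasure (cube d) := by
  have : IsProbabilityMeasure (volume.restrict (Set.Icc (0 : ℝ) 1)) := ⟨by simp⟩
  unfold cube; infer_instance

instance isProbabilityMeasure_sample (n d : ℕ) : IsProbabilityMeasure (sample n d) := by
  unfold sample; infer_instance

lemma map_sample_pair {n d : ℕ} {i j : Fin n} (hij : i ≠ j) :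
    (sample n d).map (fun ω => (ω i, ω j)) = (cube d).prod (cube d) := by
  have hind : iIndepFun (fun i (ω : Fin n → Fin d → ℝ) => ω i) (sample n d) :=
    iIndepFun_pi (X := fun _ => id) fun _ => aemeasurable_id
  rw [(hind.indepFun hij).map_prod_eq_prod_map_map (measurable_pi_apply i).aemeasurable
    (measurable_pi_apply j).aemeasurable]
  exact congr_arg₂ _ (measurePreserving_eval _ i).map_eq (measurePreserving_eval _ j).map_eq

lemma measurableSet_dominates {d : ℕ} :
    MeasurableSet {p : (Fin d → ℝ) × (Fin d → ℝ) | dominates p.1 p.2} := by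
  simp only [dominates, Set.ofPred_forall]
  exact MeasurableSet.iInter fun k => measurableSet_le (by fun_prop) (by fun_prop)

lemma prod_restrict_Icc_setOf_le :
    (volume.restrict (Set.Icc (0 : ℝ) 1)).prod (volume.restrict (Set.Icc (0 : ℝ) 1))
      {q : ℝ × ℝ | q.2 ≤ q.1} = 2⁻¹ := by
  rw [Measure.prod_apply (measurableSet_le measurable_snd measurable_fst)]
  calc ∫⁻ x, volume.restrict (Set.Icc (0 : ℝ) 1) (Prod.mk x ⁻¹' {q | q.2 ≤ q.1})
          ∂volume.restrict (Set.Icc (0 : ℝ) 1)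
      = ∫⁻ x in Set.Icc (0 : ℝ) 1, ENNReal.ofReal x := by
        refine setLIntegral_congr_fun measurableSet_Icc fun x hx => ?_
        have : Prod.mk x ⁻¹' {q : ℝ × ℝ | q.2 ≤ q.1} ∩ Set.Icc 0 1 = Set.Icc 0 x := by
          ext y; simp only [Set.mem_inter_iff, Set.mem_preimage, Set.mem_ofPred_eq, Set.mem_Icc]
          constructor
          · rintro ⟨hyx, hy0, -⟩; exact ⟨hy0, hyx⟩
          · rintro ⟨hy0, hyx⟩; exact ⟨hyx, hy0, hyx.trans hx.2⟩
        rw [Measure.restrict_apply' measurableSet_Icc, this, Real.volume_Icc, sub_zero]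
    _ = ENNReal.ofReal (∫ x in Set.Icc (0 : ℝ) 1, x) :=
        (ofReal_integral_eq_lintegral_ofReal continuous_id.integrableOn_Icc
          (ae_restrict_of_forall_mem measurableSet_Icc fun _ hx => hx.1)).symm
    _ = 2⁻¹ := by
        rw [integral_Icc_eq_integral_Ioc, ← intervalIntegral.integral_of_le zero_le_one,
          integral_id, show ((1 : ℝ) ^ 2 - 0 ^ 2) / 2 = 2⁻¹ by norm_num,
          ENNReal.ofReal_inv_of_pos two_pos, ENNReal.ofReal_ofNat]

lemma prod_cube_setOf_dominates (d : ℕ) :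
    (cube d).prod (cube d) {p | dominates p.1 p.2} = 2⁻¹ ^ d := by
  have hpre : MeasurableEquiv.arrowProdEquivProdArrow ℝ ℝ (Fin d) ⁻¹' {p | dominates p.1 p.2}
      = Set.univ.pi fun _ => {q : ℝ × ℝ | q.2 ≤ q.1} := by
    ext; simp [MeasurableEquiv.arrowProdEquivProdArrow, Equiv.arrowProdEquivProdArrow, dominates]
  rw [cube, ← (measurePreserving_arrowProdEquivProdArrow ℝ ℝ (Fin d) _ _).map_eq,
    Measure.map_apply (MeasurableEquiv.measurable _) measurableSet_dominates, hpre,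
    Measure.pi_pi]
  simp [prod_restrict_Icc_setOf_le]

lemma sample_setOf_dominates {n d : ℕ} {i j : Fin n} (hij : i ≠ j) :
    sample n d {ω | dominates (ω i) (ω j)} = 2⁻¹ ^ d := by
  rw [← prod_cube_setOf_dominates, ← map_sample_pair hij,
    Measure.map_apply (by fun_prop) measurableSet_dominates]
  rfl

section Counting

variable {n d : ℕ}

lemma measurableSet_setOf_dominates (i j : Fin n) :
    MeasurableSet {ω : Fin n → Fin d → ℝ | dominates (ω i) (ω j)} :=
  measurableSet_dominates.preimage (f := fun ω : Fin n → Fin d → ℝ => (ω i, ω j)) (by fun_prop)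

lemma measurable_domCount (i : Fin n) : Measurable fun ω => domCount n d ω i := by
  simp only [domCount, Finset.card_filter]
  refine Finset.measurable_sum _ fun j _ => Measurable.ite ?_ measurable_const measurable_const
  exact (MeasurableSet.const _).inter (measurableSet_setOf_dominates i j)

lemma measurable_nonParetoCount : Measurable (nonParetoCount n d) := by
  unfold nonParetoCount
  simp only [Finset.card_filter]
  exact Finset.measurable_sum _ fun i _ =>
    Measurable.ite (measurable_domCount i measurableSet_Ici) measurable_const measurable_const

lemma nonParetoCount_le_sum_domCount (ω : Fin n → Fin d → ℝ) :
    nonParetoCount n d ω ≤ ∑ i, domCount n d ω i := by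
  rw [nonParetoCount, Finset.card_filter]
  exact Finset.sum_le_sum fun i _ => by split_ifs <;> omega

lemma domCount_eq_sum_indicator (ω : Fin n → Fin d → ℝ) (i : Fin n) :
    (domCount n d ω i : ℝ≥0∞)
      = ∑ j ∈ univ.erase i, {ω : Fin n → Fin d → ℝ | dominates (ω i) (ω j)}.indicator 1 ω := by
  classical
  rw [domCount, ← Finset.filter_filter, Finset.filter_ne', Finset.card_filter]
  simp [Set.indicator_apply]

lemma lintegral_domCount (i : Fin n) :
    ∫⁻ ω, (domCount n d ω i : ℝ≥0∞) ∂sample n d = (n - 1 : ℕ) * 2⁻¹ ^ d := by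
  simp_rw [domCount_eq_sum_indicator]
  rw [lintegral_finsetSum _ fun j _ =>
    measurable_one.indicator (measurableSet_setOf_dominates i j)]
  simp_rw [lintegral_indicator_one (measurableSet_setOf_dominates _ _)]
  rw [Finset.sum_congr rfl fun j hj => sample_setOf_dominates (Finset.ne_of_mem_erase hj).symm]
  simp

lemma lintegral_nonParetoCount_le :
    ∫⁻ ω, (nonParetoCount n d ω : ℝ≥0∞) ∂sample n d ≤ n * (n - 1 : ℕ) * 2⁻¹ ^ d :=
  calc ∫⁻ ω, (nonParetoCount n d ω : ℝ≥0∞) ∂sample n d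
      ≤ ∫⁻ ω, ∑ i, (domCount n d ω i : ℝ≥0∞) ∂sample n d :=
        lintegral_mono fun ω => by
          rw [← Nat.cast_sum]; exact Nat.mono_cast (nonParetoCount_le_sum_domCount ω)
    _ = n * (n - 1 : ℕ) * 2⁻¹ ^ d := by
        rw [lintegral_finsetSum _ fun i _ => by
          exact measurable_from_top.comp (measurable_domCount i)]
        simp [lintegral_domCount, mul_assoc]

end Counting

lemma ofReal_mul_sub_one_mul_two_rpow_neg (n d : ℕ) :
    ENNReal.ofReal (n * (n - 1) * 2 ^ (-(d : ℝ))) = n * (n - 1 : ℕ) * 2⁻¹ ^ d := by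
  rcases n with _ | n
  · simp
  rw [show ((n + 1 : ℕ) : ℝ) - 1 = n by push_cast; ring, rpow_neg zero_le_two, rpow_natCast,
    ← inv_pow, ENNReal.ofReal_mul (by positivity), ENNReal.ofReal_mul (by positivity),
    ENNReal.ofReal_pow (by positivity), ENNReal.ofReal_inv_of_pos two_pos,
    ENNReal.ofReal_natCast, ENNReal.ofReal_natCast, ENNReal.ofReal_ofNat, Nat.add_sub_cancel]

lemma tendsto_sq_mul_two_rpow_neg {d : ℕ → ℝ}
    (hd : Tendsto (fun n : ℕ => d n - 2 / log 2 * log n) atTop atTop) :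
    Tendsto (fun n : ℕ => (n : ℝ) ^ 2 * 2 ^ (-d n)) atTop (nhds 0) := by
  have hlog2 : 0 < log 2 := log_pos one_lt_two
  have hexp : Tendsto (fun n : ℕ => exp (-log 2 * (d n - 2 / log 2 * log n))) atTop (nhds 0) :=
    tendsto_exp_atBot.comp ((tendsto_const_mul_atBot_of_neg (neg_neg_of_pos hlog2)).2 hd)
  refine hexp.congr' ((eventually_ge_atTop 1).mono fun n hn => ?_)
  have hn : (0 : ℝ) < n := by exact_mod_cast hn
  dsimp only
  rw [rpow_def_of_pos two_pos, ← exp_log (pow_pos hn 2), ← exp_add, log_pow]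
  congr 1
  field_simp
  ring

lemma integral_natCast_le_of_lintegral_le {α : Type*} [MeasurableSpace α] {μ : Measure α}
    {f : α → ℕ} (hf : Measurable f) {b : ℝ} (hb : 0 ≤ b)
    (h : ∫⁻ x, (f x : ℝ≥0∞) ∂μ ≤ ENNReal.ofReal b) : ∫ x, (f x : ℝ) ∂μ ≤ b := by
  rw [integral_eq_lintegral_of_nonneg_ae (.of_forall fun x => Nat.cast_nonneg (f x))
    (measurable_from_top.comp hf).aestronglyMeasurable]
  simpa using ENNReal.toReal_le_of_le_ofReal hb h

lemma tendsto_measure_natCast_ge_of_lintegral_le {α : ℕ → Type*} [∀ n, MeasurableSpace (α n)]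
    {μ : ∀ n, Measure (α n)} {f : ∀ n, α n → ℕ} (hf : ∀ n, Measurable (f n)) {b : ℕ → ℝ}
    (hb : Tendsto b atTop (nhds 0)) (h : ∀ n, ∫⁻ x, (f n x : ℝ≥0∞) ∂μ n ≤ ENNReal.ofReal (b n))
    {ε : ℝ} (hε : 0 < ε) :
    Tendsto (fun n => μ n {x | ε ≤ (f n x : ℝ)}) atTop (nhds 0) := by
  have hε' : ENNReal.ofReal ε ≠ 0 := ENNReal.ofReal_ne_zero_iff.2 hε
  have hmarkov n : μ n {x | ε ≤ (f n x : ℝ)} ≤ ENNReal.ofReal (b n) / ENNReal.ofReal ε := by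
    have : {x | ε ≤ (f n x : ℝ)} = {x | ENNReal.ofReal ε ≤ f n x} := by
      ext x; simp [← ENNReal.ofReal_natCast, ENNReal.ofReal_le_ofReal_iff]
    rw [this]
    exact (meas_ge_le_lintegral_div (measurable_from_top.comp (hf n)).aemeasurable hε'
      ENNReal.ofReal_ne_top).trans (ENNReal.div_le_div_right (h n) _)
  have hlim : Tendsto (fun n => ENNReal.ofReal (b n) / ENNReal.ofReal ε) atTop (nhds 0) := by
    simpa using ENNReal.Tendsto.div_const (ENNReal.tendsto_ofReal hb) (.inr hε')
  exact tendsto_of_tendsto_of_tendsto_of_le_of_le tendsto_const_nhds hlim (fun _ => zero_le)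
    hmarkov

theorem nonPareto_supercritical (d : ℕ → ℕ)
    (hd : Tendsto (fun n : ℕ => (d n : ℝ) - 2 / Real.log 2 * Real.log n) atTop atTop) :
    (∀ n, (∫ ω, (nonParetoCount n (d n) ω : ℝ) ∂ sample n (d n))
        ≤ (n : ℝ) * ((n : ℝ) - 1) * (2 : ℝ) ^ (-(d n : ℝ))) ∧
    Tendsto (fun n : ℕ => (n : ℝ) * ((n : ℝ) - 1) * (2 : ℝ) ^ (-(d n : ℝ))) atTop (nhds 0) ∧
    (∀ ε > (0 : ℝ), Tendsto
      (fun n : ℕ => sample n (d n) {ω | ε ≤ (nonParetoCount n (d n) ω : ℝ)}) atTop (nhds 0)) := by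
  set b : ℕ → ℝ := fun n => n * (n - 1) * 2 ^ (-(d n : ℝ))
  have hb_nonneg n : 0 ≤ b n := by
    rcases n with _ | n
    · simp [b]
    · have : (0 : ℝ) ≤ ((n + 1 : ℕ) : ℝ) - 1 := by push_cast; linarith
      positivity
  have hb_le n : b n ≤ (n : ℝ) ^ 2 * 2 ^ (-(d n : ℝ)) := by
    rw [sq]
    exact mul_le_mul_of_nonneg_right (mul_le_mul_of_nonneg_left (sub_le_self _ zero_le_one)
      n.cast_nonneg) (rpow_nonneg zero_le_two _)
  have hb : Tendsto b atTop (nhds 0) :=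
    squeeze_zero hb_nonneg hb_le (tendsto_sq_mul_two_rpow_neg hd)
  have hmean n : ∫⁻ ω, (nonParetoCount n (d n) ω : ℝ≥0∞) ∂sample n (d n) ≤ ENNReal.ofReal (b n) :=
    (ofReal_mul_sub_one_mul_two_rpow_neg n (d n)).symm ▸ lintegral_nonParetoCount_le
  exact ⟨fun n => integral_natCast_le_of_lintegral_le measurable_nonParetoCount (hb_nonneg n)
    (hmean n), hb, fun ε hε => tendsto_measure_natCast_ge_of_lintegral_le
    (fun _ => measurable_nonParetoCount) hb hmean hε⟩
end

section
/- Let X1,...,Xn be i.i.d. uniform in [0,1]^{d_n}. If d_n − (2/log 2) log n → −∞, then the number of non-Pareto points n − K_{n,d_n} tends to infinity in probability. -/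
open MeasureTheory ProbabilityTheory Filter Real Finset
open scoped ENNReal

open scoped Topology

/-!
Split the `n` points into `N` pairs of disjoint blocks `(A_g, B_g)` of `m ≈ n / (2N)` points each.
If fewer than `N` points are non-Pareto, then for some `g` no point of `A_g` dominates a point of
`B_g`. The number `W` of dominating pairs in `A_g × B_g` has mean `m² 2⁻ᵈ`, and two such pairs are
correlated only when they share a point, in which case both dominations hold with probability
`3⁻ᵈ`; the second moment method gives `P(W = 0) ≤ 2ᵈ / m² + 2 (4/3)ᵈ / m`. Both terms vanish when
`d - (2 / log 2) log n → -∞`, because `2 log (4/3) < log 2`.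
-/

theorem MeasureTheory.measurePreserving_pi_comp_of_injective {ι ι' E : Type*} [Fintype ι]
    [Fintype ι'] [MeasurableSpace E] (μ : Measure E) [IsProbabilityMeasure μ] {g : ι' → ι}
    (hg : Function.Injective g) :
    MeasurePreserving (fun ω : ι → E => ω ∘ g) (Measure.pi fun _ => μ) (Measure.pi fun _ => μ) := by
  refine ⟨by fun_prop, ?_⟩
  have hind := (iIndepFun_pi (μ := fun _ : ι => μ) (X := fun _ x => x)
    fun _ => aemeasurable_id).precomp hg
  rw [iIndepFun_iff_map_fun_eq_pi_map fun i => (measurable_pi_apply (g i)).aemeasurable] at hind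
  simp only [(measurePreserving_eval _ _).map_eq] at hind
  exact hind

theorem MeasureTheory.Measure.pi_inter_preimage_restrict_of_disjoint {ι E : Type*} [Fintype ι]
    [MeasurableSpace E] (μ : Measure E) [IsProbabilityMeasure μ] {S T : Finset ι}
    (hST : Disjoint S T) {A : Set (S → E)} {B : Set (T → E)} (hA : MeasurableSet A)
    (hB : MeasurableSet B) :
    Measure.pi (fun _ => μ) ((fun (ω : ι → E) (s : S) => ω s) ⁻¹' A
        ∩ (fun (ω : ι → E) (t : T) => ω t) ⁻¹' B)
      = Measure.pi (fun _ => μ) ((fun (ω : ι → E) (s : S) => ω s) ⁻¹' A)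
        * Measure.pi (fun _ => μ) ((fun (ω : ι → E) (t : T) => ω t) ⁻¹' B) :=
  ((iIndepFun_pi (μ := fun _ : ι => μ) (X := fun _ x => x) fun _ => aemeasurable_id).indepFun_finset
    S T hST fun i => measurable_pi_apply i).measure_inter_preimage_eq_mul _ _ hA hB

theorem MeasureTheory.Measure.pi_setOf_forall_zero_succ {E : Type*} [MeasurableSpace E]
    (μ : Measure E) [SigmaFinite μ] (R : E → E → Prop) (hR : MeasurableSet {p : E × E | R p.1 p.2}) (m : ℕ) :
    Measure.pi (fun _ : Fin (m + 1) => μ) {ω | ∀ j : Fin m, R (ω 0) (ω j.succ)}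
      = ∫⁻ x, μ {y | R x y} ^ m ∂μ := by
  have hS : MeasurableSet {p : E × (Fin m → E) | ∀ j, R p.1 (p.2 j)} := by
    simp only [Set.ofPred_forall]
    exact .iInter fun j => hR.preimage (f := fun p : E × (Fin m → E) => (p.1, p.2 j)) (by fun_prop)
  have hpre : {ω : Fin (m + 1) → E | ∀ j : Fin m, R (ω 0) (ω j.succ)}
      = MeasurableEquiv.piFinSuccAbove (fun _ => E) 0 ⁻¹' {p | ∀ j, R p.1 (p.2 j)} := by
    ext ω; simp [MeasurableEquiv.piFinSuccAbove_apply, Fin.tail]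
  rw [hpre, (measurePreserving_piFinSuccAbove (fun _ => μ) 0).measure_preimage
    hS.nullMeasurableSet, Measure.prod_apply hS]
  refine lintegral_congr fun x => ?_
  have : Prod.mk x ⁻¹' {p : E × (Fin m → E) | ∀ j, R p.1 (p.2 j)}
      = Set.univ.pi fun _ => {y | R x y} := by
    ext w; simp
  rw [this, Measure.pi_pi, Finset.prod_const, Finset.card_univ, Fintype.card_fin]

theorem measurableSet_setOf_forall_zero_succ {E : Type*} [MeasurableSpace E] {R : E → E → Prop}
    (hR : MeasurableSet {p : E × E | R p.1 p.2}) (m : ℕ) :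
    MeasurableSet {ω : Fin (m + 1) → E | ∀ j : Fin m, R (ω 0) (ω j.succ)} := by
  simp only [Set.ofPred_forall]
  exact .iInter fun j => hR.preimage (f := fun ω : Fin (m + 1) → E => (ω 0, ω j.succ)) (by fun_prop)

theorem sq_lintegral_le_lintegral_sq_mul_measure {Ω : Type*} [MeasurableSpace Ω] (μ : Measure Ω)
    {W : Ω → ℝ≥0∞} (hW : Measurable W) :
    (∫⁻ ω, W ω ∂μ) ^ 2 ≤ (∫⁻ ω, W ω ^ 2 ∂μ) * μ {ω | W ω ≠ 0} := by
  set s := {ω | W ω ≠ 0}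
  have hs : MeasurableSet s := (hW (measurableSet_singleton 0)).compl
  have hWs : W * s.indicator 1 = W := by
    ext ω
    by_cases h : W ω = 0 <;> simp [s, h]
  have hcs := ENNReal.lintegral_mul_le_Lp_mul_Lq μ Real.HolderConjugate.two_two hW.aemeasurable
    (measurable_one.indicator hs).aemeasurable
  have hsq : ∀ ω, s.indicator (1 : Ω → ℝ≥0∞) ω ^ (2 : ℝ) = s.indicator 1 ω := fun ω => by
    by_cases h : ω ∈ s <;> simp [h]
  simp only [hWs, hsq, lintegral_indicator_one hs, ENNReal.rpow_two] at hcs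
  calc (∫⁻ ω, W ω ∂μ) ^ 2
      ≤ ((∫⁻ ω, W ω ^ 2 ∂μ) ^ (1 / 2 : ℝ) * μ s ^ (1 / 2 : ℝ)) ^ 2 := pow_le_pow_left' hcs 2
    _ = (∫⁻ ω, W ω ^ 2 ∂μ) * μ s := by
        rw [mul_pow, ← ENNReal.rpow_natCast, ← ENNReal.rpow_natCast (μ s ^ _),
          ← ENNReal.rpow_mul, ← ENNReal.rpow_mul]
        norm_num

theorem measure_eq_zero_le_of_moments {Ω : Type*} [MeasurableSpace Ω] {μ : Measure Ω}
    [IsProbabilityMeasure μ] {W : Ω → ℝ≥0∞} (hW : Measurable W) {e x : ℝ} (he : 0 < e)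
    (hx : 0 ≤ x) (h1 : ∫⁻ ω, W ω ∂μ = ENNReal.ofReal e)
    (h2 : ∫⁻ ω, W ω ^ 2 ∂μ ≤ ENNReal.ofReal (x + e ^ 2)) :
    μ {ω | W ω = 0} ≤ ENNReal.ofReal (x / e ^ 2) := by
  set s := {ω | W ω ≠ 0}
  have hs : MeasurableSet s := (hW (measurableSet_singleton 0)).compl
  set t := μ.real s
  have ht1 : t ≤ 1 := measureReal_le_one
  have hPZ : e ^ 2 ≤ (x + e ^ 2) * t := by
    have := (sq_lintegral_le_lintegral_sq_mul_measure μ hW).trans (mul_le_mul_left h2 _)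
    rwa [h1, ← ofReal_measureReal, ← ENNReal.ofReal_pow he.le, ← ENNReal.ofReal_mul (by positivity),
      ENNReal.ofReal_le_ofReal_iff (by positivity)] at this
  have hcompl : {ω | W ω = 0} = sᶜ := by ext ω; simp [s]
  rw [hcompl, prob_compl_eq_one_sub hs, ← ofReal_measureReal, ← ENNReal.ofReal_one,
    ← ENNReal.ofReal_sub _ measureReal_nonneg]
  refine ENNReal.ofReal_le_ofReal ?_
  rw [le_div_iff₀ (by positivity)]
  nlinarith [mul_nonneg hx (sub_nonneg.2 ht1)]

theorem one_sub_measure_compl_le {Ω : Type*} [MeasurableSpace Ω] (μ : Measure Ω)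
    [IsProbabilityMeasure μ] (s : Set Ω) : 1 - μ sᶜ ≤ μ s := by
  rw [tsub_le_iff_right, ← measure_univ (μ := μ)]
  exact measure_univ_le_add_compl s

instance : IsProbabilityMeasure (volume.restrict (Set.Icc (0 : ℝ) 1)) :=
  ⟨by simp [Real.volume_Icc]⟩

instance (d : ℕ) : IsProbabilityMeasure (cube d) := by
  unfold cube; infer_instance

instance (n d : ℕ) : IsProbabilityMeasure (sample n d) := by
  unfold sample; infer_instance

theorem ae_cube (d : ℕ) : ∀ᵐ x ∂cube d, ∀ k, x k ∈ Set.Icc (0 : ℝ) 1 :=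
  ae_all_iff.2 fun k => (measurePreserving_eval _ k).quasiMeasurePreserving.ae
    (ae_restrict_mem measurableSet_Icc)

theorem measurableSet_dominates_s12 {α : Type*} [MeasurableSpace α] {d : ℕ} {f g : α → Fin d → ℝ}
    (hf : Measurable f) (hg : Measurable g) : MeasurableSet {a | dominates (f a) (g a)} := by
  simp only [dominates, Set.ofPred_forall]
  exact .iInter fun k => measurableSet_le (hg.eval) (hf.eval)

theorem cube_setOf_dominates {d : ℕ} {x : Fin d → ℝ} (hx : ∀ k, x k ∈ Set.Icc (0 : ℝ) 1) :
    cube d {y | dominates x y} = ENNReal.ofReal (∏ k, x k) := by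
  have hset : {y | dominates x y} = Set.univ.pi fun k => Set.Iic (x k) := by
    ext y; simp only [dominates, Set.mem_ofPred_eq, Set.mem_univ_pi, Set.mem_Iic]
  rw [hset, cube, Measure.pi_pi, ENNReal.ofReal_prod_of_nonneg fun k _ => (hx k).1]
  refine Finset.prod_congr rfl fun k _ => ?_
  have : Set.Iic (x k) ∩ Set.Icc 0 1 = Set.Icc 0 (x k) := by
    ext t; simp only [Set.mem_inter_iff, Set.mem_Iic, Set.mem_Icc]; grind [(hx k).2]
  rw [Measure.restrict_apply measurableSet_Iic, this, Real.volume_Icc, sub_zero]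

theorem cube_setOf_dominated {d : ℕ} {x : Fin d → ℝ} (hx : ∀ k, x k ∈ Set.Icc (0 : ℝ) 1) :
    cube d {y | dominates y x} = ENNReal.ofReal (∏ k, (1 - x k)) := by
  have hset : {y | dominates y x} = Set.univ.pi fun k => Set.Ici (x k) := by
    ext y; simp only [dominates, Set.mem_ofPred_eq, Set.mem_univ_pi, Set.mem_Ici]
  rw [hset, cube, Measure.pi_pi,
    ENNReal.ofReal_prod_of_nonneg fun k _ => sub_nonneg.2 (hx k).2]
  refine Finset.prod_congr rfl fun k _ => ?_
  have : Set.Ici (x k) ∩ Set.Icc 0 1 = Set.Icc (x k) 1 := by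
    ext t; simp only [Set.mem_inter_iff, Set.mem_Ici, Set.mem_Icc]; grind [(hx k).1]
  rw [Measure.restrict_apply measurableSet_Ici, this, Real.volume_Icc]

theorem lintegral_cube_ofReal_prod (d : ℕ) {g : ℝ → ℝ} (hg : Continuous g)
    (hg0 : ∀ a ∈ Set.Icc (0 : ℝ) 1, 0 ≤ g a) :
    ∫⁻ x, ENNReal.ofReal (∏ k, g (x k)) ∂cube d
      = ENNReal.ofReal ((∫ a in (0 : ℝ)..1, g a) ^ d) := by
  rw [← ofReal_integral_eq_lintegral_ofReal]
  · rw [cube, integral_fintype_prod_eq_pow, Fintype.card_fin,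
      intervalIntegral.integral_of_le zero_le_one, integral_Icc_eq_integral_Ioc]
  · exact Integrable.fintype_prod fun _ => hg.integrableOn_Icc
  · exact (ae_cube d).mono fun x hx => Finset.prod_nonneg fun k _ => hg0 _ (hx k)

theorem sample_dominates_all (m d : ℕ) :
    sample (m + 1) d {ω | ∀ j : Fin m, dominates (ω 0) (ω j.succ)}
      = ENNReal.ofReal (((m : ℝ) + 1)⁻¹ ^ d) := by
  rw [sample, Measure.pi_setOf_forall_zero_succ _ dominates
    (measurableSet_dominates_s12 measurable_fst measurable_snd)]
  calc ∫⁻ x, cube d {y | dominates x y} ^ m ∂cube d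
      = ∫⁻ x, ENNReal.ofReal (∏ k, x k ^ m) ∂cube d := by
        refine lintegral_congr_ae ((ae_cube d).mono fun x hx => ?_)
        dsimp only
        rw [cube_setOf_dominates hx, Finset.prod_pow,
          ENNReal.ofReal_pow (Finset.prod_nonneg fun k _ => (hx k).1)]
    _ = ENNReal.ofReal (((m : ℝ) + 1)⁻¹ ^ d) := by
        rw [lintegral_cube_ofReal_prod d (continuous_pow m) fun a ha => pow_nonneg ha.1 m,
          integral_pow]
        norm_num

theorem sample_dominated_by_all (m d : ℕ) :
    sample (m + 1) d {ω | ∀ j : Fin m, dominates (ω j.succ) (ω 0)}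
      = ENNReal.ofReal (((m : ℝ) + 1)⁻¹ ^ d) := by
  rw [sample, Measure.pi_setOf_forall_zero_succ _ (fun x y => dominates y x)
    (measurableSet_dominates_s12 measurable_snd measurable_fst)]
  calc ∫⁻ x, cube d {y | dominates y x} ^ m ∂cube d
      = ∫⁻ x, ENNReal.ofReal (∏ k, (1 - x k) ^ m) ∂cube d := by
        refine lintegral_congr_ae ((ae_cube d).mono fun x hx => ?_)
        dsimp only
        rw [cube_setOf_dominated hx, Finset.prod_pow,
          ENNReal.ofReal_pow (Finset.prod_nonneg fun k _ => sub_nonneg.2 (hx k).2)]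
    _ = ENNReal.ofReal (((m : ℝ) + 1)⁻¹ ^ d) := by
        rw [lintegral_cube_ofReal_prod d (g := fun a => (1 - a) ^ m) (by fun_prop)
          fun a ha => pow_nonneg (sub_nonneg.2 ha.2) m,
          intervalIntegral.integral_comp_sub_left (fun a => a ^ m), integral_pow]
        norm_num

def domEvent (n d : ℕ) (i j : Fin n) : Set (Fin n → Fin d → ℝ) :=
  {ω | dominates (ω i) (ω j)}

theorem measurableSet_domEvent (n d : ℕ) (i j : Fin n) : MeasurableSet (domEvent n d i j) :=
  measurableSet_dominates_s12 (measurable_pi_apply i) (measurable_pi_apply j)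

theorem sample_preimage_comp_of_injective {n m d : ℕ} {g : Fin m → Fin n}
    (hg : Function.Injective g) {S : Set (Fin m → Fin d → ℝ)} (hS : MeasurableSet S) :
    sample n d ((· ∘ g) ⁻¹' S) = sample m d S :=
  (measurePreserving_pi_comp_of_injective (cube d) hg).measure_preimage hS.nullMeasurableSet

theorem sample_domEvent {n d : ℕ} {i j : Fin n} (hij : i ≠ j) :
    sample n d (domEvent n d i j) = ENNReal.ofReal (2⁻¹ ^ d) := by
  have hpre : domEvent n d i j
      = (· ∘ ![i, j]) ⁻¹' {ω | ∀ j : Fin 1, dominates (ω 0) (ω j.succ)} := by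
    ext ω; simp [domEvent]
  rw [hpre, sample_preimage_comp_of_injective (injective_pair_iff_ne.2 hij)
    (measurableSet_setOf_forall_zero_succ
      (measurableSet_dominates_s12 measurable_fst measurable_snd) 1), sample_dominates_all]
  norm_num

theorem sample_domEvent_inter_domEvent_left {n d : ℕ} {i j j' : Fin n} (hij : i ≠ j)
    (hij' : i ≠ j') (hjj' : j ≠ j') :
    sample n d (domEvent n d i j ∩ domEvent n d i j') = ENNReal.ofReal (3⁻¹ ^ d) := by
  have hpre : domEvent n d i j ∩ domEvent n d i j'
      = (· ∘ ![i, j, j']) ⁻¹' {ω | ∀ j : Fin 2, dominates (ω 0) (ω j.succ)} := by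
    ext ω; simp [domEvent, Fin.forall_fin_two]
  have hinj : Function.Injective ![i, j, j'] := by
    refine Fin.cons_injective_iff.2 ⟨?_, injective_pair_iff_ne.2 hjj'⟩
    simpa using ⟨hij', hij⟩
  rw [hpre, sample_preimage_comp_of_injective hinj
    (measurableSet_setOf_forall_zero_succ
      (measurableSet_dominates_s12 measurable_fst measurable_snd) 2), sample_dominates_all]
  norm_num

theorem sample_domEvent_inter_domEvent_right {n d : ℕ} {i i' j : Fin n} (hij : i ≠ j)
    (hi'j : i' ≠ j) (hii' : i ≠ i') :
    sample n d (domEvent n d i j ∩ domEvent n d i' j) = ENNReal.ofReal (3⁻¹ ^ d) := by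
  have hpre : domEvent n d i j ∩ domEvent n d i' j
      = (· ∘ ![j, i, i']) ⁻¹' {ω | ∀ j : Fin 2, dominates (ω j.succ) (ω 0)} := by
    ext ω; simp [domEvent, Fin.forall_fin_two]
  have hinj : Function.Injective ![j, i, i'] := by
    refine Fin.cons_injective_iff.2 ⟨?_, injective_pair_iff_ne.2 hii'⟩
    simpa using ⟨hi'j.symm, hij.symm⟩
  rw [hpre, sample_preimage_comp_of_injective hinj
    (measurableSet_setOf_forall_zero_succ (R := fun x y => dominates y x)
      (measurableSet_dominates_s12 measurable_snd measurable_fst) 2), sample_dominated_by_all]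
  norm_num

theorem sample_domEvent_inter_domEvent_of_disjoint {n d : ℕ} {i j i' j' : Fin n}
    (hij : i ≠ j) (hi'j' : i' ≠ j') (h : Disjoint ({i, j} : Finset (Fin n)) {i', j'}) :
    sample n d (domEvent n d i j ∩ domEvent n d i' j')
      = ENNReal.ofReal (2⁻¹ ^ d) * ENNReal.ofReal (2⁻¹ ^ d) := by
  calc sample n d (domEvent n d i j ∩ domEvent n d i' j')
      = sample n d (domEvent n d i j) * sample n d (domEvent n d i' j') :=
        Measure.pi_inter_preimage_restrict_of_disjoint (cube d) h
        (A := {x | dominates (x ⟨i, by simp⟩) (x ⟨j, by simp⟩)})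
        (B := {x | dominates (x ⟨i', by simp⟩) (x ⟨j', by simp⟩)})
        (measurableSet_dominates_s12 (measurable_pi_apply _) (measurable_pi_apply _))
        (measurableSet_dominates_s12 (measurable_pi_apply _) (measurable_pi_apply _))
    _ = _ := by rw [sample_domEvent hij, sample_domEvent hi'j']

theorem sample_domEvent_inter_le {n d : ℕ} {A B : Finset (Fin n)} (hAB : Disjoint A B)
    {p q : Fin n × Fin n} (hp : p ∈ A ×ˢ B) (hq : q ∈ A ×ˢ B) :
    -- one summand for each way the pairs `p` and `q` can overlap
    sample n d (domEvent n d p.1 p.2 ∩ domEvent n d q.1 q.2)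
      ≤ ENNReal.ofReal ((if p = q then 2⁻¹ ^ d else 0) + (if p.1 = q.1 then 3⁻¹ ^ d else 0)
          + (if p.2 = q.2 then 3⁻¹ ^ d else 0) + 2⁻¹ ^ d * 2⁻¹ ^ d) := by
  obtain ⟨i, j⟩ := p
  obtain ⟨i', j'⟩ := q
  simp only [Finset.mem_product] at hp hq
  have hne : ∀ {a b}, a ∈ A → b ∈ B → a ≠ b := fun ha hb => Finset.disjoint_iff_ne.1 hAB _ ha _ hb
  have h2 : (0 : ℝ) ≤ 2⁻¹ ^ d := by positivity
  have h3 : (0 : ℝ) ≤ 3⁻¹ ^ d := by positivity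
  by_cases hii' : i = i' <;> by_cases hjj' : j = j'
  · subst hii' hjj'
    rw [Set.inter_self, sample_domEvent (hne hp.1 hp.2)]
    refine ENNReal.ofReal_le_ofReal ?_
    simp only [if_true]
    nlinarith
  · subst hii'
    rw [sample_domEvent_inter_domEvent_left (hne hp.1 hp.2) (hne hp.1 hq.2) hjj']
    refine ENNReal.ofReal_le_ofReal ?_
    simp [hjj']
  · subst hjj'
    rw [sample_domEvent_inter_domEvent_right (hne hp.1 hp.2) (hne hq.1 hp.2) hii']
    refine ENNReal.ofReal_le_ofReal ?_
    simp [hii']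
  · have hdisj : Disjoint ({i, j} : Finset (Fin n)) {i', j'} := by
      simp only [disjoint_insert_right, mem_insert, mem_singleton, not_or,
        disjoint_singleton_right]
      exact ⟨⟨Ne.symm hii', hne hq.1 hp.2⟩, (hne hp.1 hq.2).symm, Ne.symm hjj'⟩
    rw [sample_domEvent_inter_domEvent_of_disjoint (hne hp.1 hp.2) (hne hq.1 hq.2) hdisj,
      ← ENNReal.ofReal_mul h2]
    refine ENNReal.ofReal_le_ofReal ?_
    simp [hii', hjj']

theorem sum_sum_overlap_weights {α : Type*} [DecidableEq α] (A B : Finset α) (P Q : ℝ) :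
    ∑ p ∈ A ×ˢ B, ∑ q ∈ A ×ˢ B, ((if p = q then P else 0) + (if p.1 = q.1 then Q else 0)
        + (if p.2 = q.2 then Q else 0) + P * P)
      = #A * #B * P + #A * #B * (#A + #B) * Q + (#A * #B * P) ^ 2 := by
  have hrow : ∀ p ∈ A ×ˢ B, ∑ q ∈ A ×ˢ B, ((if p = q then P else 0)
      + (if p.1 = q.1 then Q else 0) + (if p.2 = q.2 then Q else 0) + P * P)
        = P + (#A + #B) * Q + #A * #B * P * P := fun p hp => by
    rw [Finset.mem_product] at hp
    simp only [Finset.sum_add_distrib, Finset.sum_ite_eq, Finset.mem_product, hp, and_self,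
      if_true]
    rw [Finset.sum_product_right (s := A), Finset.sum_product (s := A)]
    simp [Finset.sum_ite_eq, hp.1, hp.2]
    ring
  rw [Finset.sum_congr rfl hrow, Finset.sum_const, Finset.card_product, nsmul_eq_mul]
  push_cast
  ring

noncomputable def dominatingPairs (n d : ℕ) (A B : Finset (Fin n)) (ω : Fin n → Fin d → ℝ) : ℝ≥0∞ :=
  ∑ p ∈ A ×ˢ B, (domEvent n d p.1 p.2).indicator 1 ω

section dominatingPairs

variable {n d : ℕ} {A B : Finset (Fin n)}

theorem measurable_dominatingPairs : Measurable (dominatingPairs n d A B) :=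
  Finset.measurable_sum _ fun _ _ => measurable_one.indicator (measurableSet_domEvent _ _ _ _)

theorem setOf_dominatingPairs_eq_zero :
    {ω | dominatingPairs n d A B ω = 0} = {ω | ∀ i ∈ A, ∀ j ∈ B, ¬ dominates (ω i) (ω j)} := by
  ext ω
  simp [dominatingPairs, Finset.sum_eq_zero_iff, domEvent]
  exact ⟨fun h a ha b hb => h a b ha hb, fun h a b ha hb => h a ha b hb⟩

theorem lintegral_dominatingPairs (hAB : Disjoint A B) :
    ∫⁻ ω, dominatingPairs n d A B ω ∂sample n d = ENNReal.ofReal (#A * #B * 2⁻¹ ^ d) := by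
  unfold dominatingPairs
  rw [lintegral_finsetSum _ fun p _ =>
    measurable_one.indicator (measurableSet_domEvent _ _ _ _)]
  calc ∑ p ∈ A ×ˢ B, ∫⁻ ω, (domEvent n d p.1 p.2).indicator 1 ω ∂sample n d
      = ∑ p ∈ A ×ˢ B, ENNReal.ofReal (2⁻¹ ^ d) := Finset.sum_congr rfl fun p hp => by
        rw [Finset.mem_product] at hp
        rw [lintegral_indicator_one (measurableSet_domEvent _ _ _ _),
          sample_domEvent (Finset.disjoint_iff_ne.1 hAB _ hp.1 _ hp.2)]
    _ = ENNReal.ofReal (#A * #B * 2⁻¹ ^ d) := by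
        rw [Finset.sum_const, Finset.card_product, nsmul_eq_mul,
          ENNReal.ofReal_mul (by positivity)]
        norm_cast

theorem lintegral_dominatingPairs_sq_le (hAB : Disjoint A B) :
    ∫⁻ ω, dominatingPairs n d A B ω ^ 2 ∂sample n d ≤ ENNReal.ofReal
      (#A * #B * 2⁻¹ ^ d + #A * #B * (#A + #B) * 3⁻¹ ^ d + (#A * #B * 2⁻¹ ^ d) ^ 2) := by
  have hD : ∀ p q : Fin n × Fin n,
      MeasurableSet (domEvent n d p.1 p.2 ∩ domEvent n d q.1 q.2) := fun p q =>
    (measurableSet_domEvent _ _ _ _).inter (measurableSet_domEvent _ _ _ _)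
  have hsq : ∀ ω, dominatingPairs n d A B ω ^ 2 = ∑ p ∈ A ×ˢ B, ∑ q ∈ A ×ˢ B,
      (domEvent n d p.1 p.2 ∩ domEvent n d q.1 q.2).indicator 1 ω := fun ω => by
    simp only [dominatingPairs, sq, Finset.sum_mul_sum, Set.inter_indicator_one, Pi.mul_apply]
  rw [lintegral_congr hsq, lintegral_finsetSum _ fun p _ =>
    Finset.measurable_sum _ fun q _ => measurable_one.indicator (hD p q)]
  calc ∑ p ∈ A ×ˢ B, ∫⁻ ω, ∑ q ∈ A ×ˢ B,
        (domEvent n d p.1 p.2 ∩ domEvent n d q.1 q.2).indicator 1 ω ∂sample n d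
      = ∑ p ∈ A ×ˢ B, ∑ q ∈ A ×ˢ B,
          sample n d (domEvent n d p.1 p.2 ∩ domEvent n d q.1 q.2) :=
        Finset.sum_congr rfl fun p _ => by
          rw [lintegral_finsetSum _ fun q _ => measurable_one.indicator (hD p q)]
          exact Finset.sum_congr rfl fun q _ => lintegral_indicator_one (hD p q)
    _ ≤ ∑ p ∈ A ×ˢ B, ∑ q ∈ A ×ˢ B, ENNReal.ofReal
          ((if p = q then 2⁻¹ ^ d else 0) + (if p.1 = q.1 then 3⁻¹ ^ d else 0)
            + (if p.2 = q.2 then 3⁻¹ ^ d else 0) + 2⁻¹ ^ d * 2⁻¹ ^ d) :=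
        Finset.sum_le_sum fun p hp => Finset.sum_le_sum fun q hq =>
          sample_domEvent_inter_le hAB hp hq
    _ = _ := by
        rw [← sum_sum_overlap_weights, ENNReal.ofReal_sum_of_nonneg fun p _ =>
          Finset.sum_nonneg fun q _ => by positivity]
        exact Finset.sum_congr rfl fun p _ =>
          (ENNReal.ofReal_sum_of_nonneg fun q _ => by positivity).symm

end dominatingPairs

theorem sample_forall_not_dominates_le {n d : ℕ} {A B : Finset (Fin n)} (hAB : Disjoint A B)
    (hA : A.Nonempty) (hB : B.Nonempty) :
    sample n d {ω | ∀ i ∈ A, ∀ j ∈ B, ¬ dominates (ω i) (ω j)}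
      ≤ ENNReal.ofReal ((2 ^ d + (#A + #B) * (4 / 3) ^ d) / (#A * #B)) := by
  rw [← setOf_dominatingPairs_eq_zero]
  refine (measure_eq_zero_le_of_moments measurable_dominatingPairs (by positivity)
    (by positivity) (lintegral_dominatingPairs hAB) (lintegral_dominatingPairs_sq_le hAB)).trans
    (le_of_eq (congrArg ENNReal.ofReal ?_))
  have hA0 : (#A : ℝ) ≠ 0 := by positivity
  have hB0 : (#B : ℝ) ≠ 0 := by positivity
  rw [inv_pow, inv_pow, div_pow, show (4 : ℝ) ^ d = 2 ^ d * 2 ^ d by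
    rw [← mul_pow]; norm_num]
  field_simp

theorem one_le_domCount {n d : ℕ} {ω : Fin n → Fin d → ℝ} {i j : Fin n} (hij : i ≠ j)
    (h : dominates (ω i) (ω j)) : 1 ≤ domCount n d ω i :=
  Finset.card_pos.2 ⟨j, by simp [hij.symm, h]⟩

theorem le_nonParetoCount {n d N : ℕ} {ω : Fin n → Fin d → ℝ} (A : Fin N → Finset (Fin n))
    (hA : Pairwise (Function.onFun Disjoint A)) (h : ∀ g, ∃ i ∈ A g, 1 ≤ domCount n d ω i) :
    N ≤ nonParetoCount n d ω := by
  choose F hFA hF using h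
  have hinj : Function.Injective F := fun g g' hgg' => by
    by_contra hne
    exact Finset.disjoint_left.1 (hA hne) (hFA g) (hgg' ▸ hFA g')
  unfold nonParetoCount
  simpa using Finset.card_le_card_of_injOn F (s := Finset.univ) (by simp [hF]) hinj.injOn

theorem sample_nonParetoCount_lt_le {n d N m : ℕ} (hm : 0 < m) (hn : 2 * N * m ≤ n) :
    sample n d {ω | nonParetoCount n d ω < N}
      ≤ N * ENNReal.ofReal ((2 ^ d + (m + m) * (4 / 3) ^ d) / (m * m)) := by
  obtain ⟨e⟩ : Nonempty ((Fin N × Fin 2) × Fin m ↪ Fin n) :=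
    Function.Embedding.nonempty_of_card_le (by simpa [mul_comm] using hn)
  -- `blk (g, 0)` and `blk (g, 1)` are the blocks `A_g` and `B_g` of size `m`
  set blk : Fin N × Fin 2 → Finset (Fin n) := fun a => Finset.univ.image fun t => e (a, t)
  have hcard : ∀ a, #(blk a) = m := fun a => by
    rw [Finset.card_image_of_injective _ fun t t' h => by simpa using e.injective h,
      Finset.card_univ, Fintype.card_fin]
  have hdisj : ∀ a b, a ≠ b → Disjoint (blk a) (blk b) := fun a b hab =>
    Finset.disjoint_left.2 fun x hx hx' => by
      obtain ⟨t, -, rfl⟩ := Finset.mem_image.1 hx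
      obtain ⟨t', -, ht'⟩ := Finset.mem_image.1 hx'
      exact hab (Prod.ext_iff.1 (e.injective ht')).1.symm
  have hne : ∀ a, (blk a).Nonempty := fun a => Finset.card_pos.1 (hcard a ▸ hm)
  have hsub : {ω | nonParetoCount n d ω < N}
      ⊆ ⋃ g, {ω | ∀ i ∈ blk (g, 0), ∀ j ∈ blk (g, 1), ¬ dominates (ω i) (ω j)} := by
    intro ω hω
    by_contra hc
    simp only [Set.mem_iUnion, Set.mem_ofPred_eq, not_exists, not_forall, not_not] at hc
    refine (show nonParetoCount n d ω < N from hω).not_ge (le_nonParetoCount (fun g => blk (g, 0))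
      (fun g g' hgg' => hdisj _ _ (by simpa using hgg')) fun g => ?_)
    obtain ⟨i, hi, j, hj, hij⟩ := hc g
    exact ⟨i, hi, one_le_domCount (Finset.disjoint_iff_ne.1 (hdisj _ _ (by simp)) i hi j hj) hij⟩
  calc sample n d {ω | nonParetoCount n d ω < N}
      ≤ ∑ g, sample n d {ω | ∀ i ∈ blk (g, 0), ∀ j ∈ blk (g, 1), ¬ dominates (ω i) (ω j)} :=
        (measure_mono hsub).trans (measure_iUnion_fintype_le _ _)
    _ ≤ ∑ _g : Fin N, ENNReal.ofReal ((2 ^ d + (m + m) * (4 / 3) ^ d) / (m * m)) :=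
        Finset.sum_le_sum fun g _ => by
          simpa only [hcard] using sample_forall_not_dominates_le (hdisj _ _ (by simp))
            (hne (g, 0)) (hne (g, 1))
    _ = _ := by simp

theorem Filter.Tendsto.sub_mul_log_of_le {α : Type*} {l : Filter α} {f x y : α → ℝ} {c K : ℝ}
    (hc : 0 ≤ c) (hK : 0 < K) (hy : ∀ᶠ a in l, 0 < y a ∧ y a ≤ K * x a)
    (h : Tendsto (fun a => f a - c * Real.log (y a)) l atBot) :
    Tendsto (fun a => f a - c * Real.log (x a)) l atBot := by
  refine tendsto_atBot_mono' l ?_ (tendsto_atBot_add_const_right l (c * Real.log K) h)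
  filter_upwards [hy] with a ⟨hy0, hyx⟩
  have hx0 : 0 < x a := pos_of_mul_pos_right (hy0.trans_le hyx) hK.le
  have : Real.log (y a) ≤ Real.log K + Real.log (x a) := by
    rw [← Real.log_mul hK.ne' hx0.ne']
    exact Real.log_le_log hy0 hyx
  nlinarith

theorem tendsto_two_pow_div_sq {α : Type*} {l : Filter α} {d : α → ℕ} {x : α → ℝ}
    (hx : ∀ᶠ a in l, 0 < x a)
    (h : Tendsto (fun a => (d a : ℝ) - 2 / Real.log 2 * Real.log (x a)) l atBot) :
    Tendsto (fun a => (2 : ℝ) ^ d a / x a ^ 2) l (𝓝 0) := by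
  have hlog2 : 0 < Real.log 2 := Real.log_pos one_lt_two
  refine (Real.tendsto_exp_atBot.comp (h.const_mul_atBot hlog2)).congr' ?_
  filter_upwards [hx] with a hxa
  have hx2 : Real.exp (2 * Real.log (x a)) = x a ^ 2 := by
    rw [← Real.exp_log (pow_pos hxa 2), Real.log_pow]
    norm_num
  rw [Function.comp_apply, mul_sub, ← mul_assoc, mul_div_cancel₀ _ hlog2.ne', Real.exp_sub,
    hx2, mul_comm, ← Real.log_pow, Real.exp_log (by positivity)]

theorem tendsto_four_thirds_pow_div {α : Type*} {l : Filter α} {d : α → ℕ} {x : α → ℝ}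
    (hx : Tendsto x l atTop)
    (h : Tendsto (fun a => (d a : ℝ) - 2 / Real.log 2 * Real.log (x a)) l atBot) :
    Tendsto (fun a => (4 / 3 : ℝ) ^ d a / x a) l (𝓝 0) := by
  have hlog2 : 0 < Real.log 2 := Real.log_pos one_lt_two
  have hlog43 : 0 < Real.log (4 / 3) := Real.log_pos (by norm_num)
  have hc : 2 / Real.log 2 * Real.log (4 / 3) - 1 < 0 := by
    rw [sub_neg, div_mul_eq_mul_div, div_lt_one hlog2, ← Real.log_rpow (by norm_num)]
    exact Real.log_lt_log (by positivity) (by norm_num)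
  have hsum := (h.const_mul_atBot hlog43).atBot_add_atBot
    ((tendsto_const_mul_atBot_of_neg hc).2 (Real.tendsto_log_atTop.comp hx))
  refine (Real.tendsto_exp_atBot.comp hsum).congr' ?_
  filter_upwards [hx.eventually_gt_atTop 0] with a hxa
  simp only [Function.comp_apply]
  rw [show Real.log (4 / 3) * ((d a : ℝ) - 2 / Real.log 2 * Real.log (x a))
      + (2 / Real.log 2 * Real.log (4 / 3) - 1) * Real.log (x a)
      = d a * Real.log (4 / 3) - Real.log (x a) by ring,
    Real.exp_sub, ← Real.log_pow, Real.exp_log (by positivity), Real.exp_log hxa]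

theorem le_two_mul_mul_div {n b : ℕ} (hb : 0 < b) (h : b ≤ n) : n ≤ 2 * b * (n / b) := by
  have hlt : n < n / b * b + b := Nat.lt_div_mul_add hb
  have hq : 1 ≤ n / b := (Nat.one_le_div_iff hb).2 h
  nlinarith

theorem tendsto_subcritical_bound {d m : ℕ → ℕ} {K : ℝ} (hK : 0 < K)
    (hd : Tendsto (fun n => (d n : ℝ) - 2 / Real.log 2 * Real.log n) atTop atBot)
    (hm : ∀ᶠ n in atTop, 0 < m n ∧ (n : ℝ) ≤ K * m n) :
    Tendsto (fun n => (2 ^ d n + (m n + m n) * (4 / 3) ^ d n) / (m n * m n : ℝ)) atTop (𝓝 0) := by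
  have hm_pos : ∀ᶠ n in atTop, (0 : ℝ) < m n := hm.mono fun n hn => Nat.cast_pos.2 hn.1
  have hn_le : ∀ᶠ n : ℕ in atTop, (0 : ℝ) < n ∧ (n : ℝ) ≤ K * m n :=
    (hm.and (eventually_gt_atTop 0)).mono fun n hn => ⟨Nat.cast_pos.2 hn.2, hn.1.2⟩
  have hm_top : Tendsto (fun n => (m n : ℝ)) atTop atTop :=
    tendsto_atTop_mono' _ (hn_le.mono fun n hn => (div_le_iff₀' hK).2 hn.2)
      (tendsto_natCast_atTop_atTop.atTop_div_const hK)
  have hdm := hd.sub_mul_log_of_le (by positivity) hK hn_le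
  have hsum := (tendsto_two_pow_div_sq hm_pos hdm).add
    ((tendsto_four_thirds_pow_div hm_top hdm).const_mul 2)
  rw [mul_zero, add_zero] at hsum
  refine hsum.congr' (hm_pos.mono fun n hn => ?_)
  field_simp
  ring

theorem nonPareto_subcritical (d : ℕ → ℕ)
    (hd : Tendsto (fun n => (d n : ℝ) - 2 / Real.log 2 * Real.log n) atTop atBot) :
    ∀ N : ℕ, Tendsto
      (fun n => sample n (d n) {ω | N ≤ nonParetoCount n (d n) ω}) atTop (nhds 1) := by
  intro N
  -- blocks of size `n / b`; using `N + 1` keeps `b` positive when `N = 0`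
  set b := 2 * (N + 1)
  have hm_le : ∀ n, 2 * N * (n / b) ≤ n := fun n =>
    (Nat.mul_le_mul_right _ (by omega)).trans (Nat.mul_div_le n b)
  have hm : ∀ᶠ n in atTop, 0 < n / b ∧ (n : ℝ) ≤ (2 * b : ℕ) * (n / b : ℕ) :=
    (eventually_ge_atTop b).mono fun n hn =>
      ⟨Nat.div_pos hn (by omega), by exact_mod_cast le_two_mul_mul_div (by omega) hn⟩
  have hbound := ENNReal.tendsto_ofReal
    ((tendsto_subcritical_bound (by positivity) hd hm).const_mul (N : ℝ))
  rw [mul_zero, ENNReal.ofReal_zero] at hbound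
  have hbad : Tendsto (fun n => sample n (d n) {ω | nonParetoCount n (d n) ω < N}) atTop (𝓝 0) :=
    tendsto_of_tendsto_of_tendsto_of_le_of_le' tendsto_const_nhds hbound
      (Eventually.of_forall fun _ => zero_le) (hm.mono fun n hn =>
        (sample_nonParetoCount_lt_le hn.1 (hm_le n)).trans_eq
          (by rw [ENNReal.ofReal_mul (by positivity), ENNReal.ofReal_natCast]))
  refine tendsto_of_tendsto_of_tendsto_of_le_of_le
    (by simpa using ENNReal.Tendsto.sub tendsto_const_nhds hbad (.inl ENNReal.one_ne_top))
    tendsto_const_nhds (fun n => ?_) fun n => prob_le_one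
  simpa only [Set.compl_ofPred, not_le] using one_sub_measure_compl_le (sample n (d n))
    {ω | N ≤ nonParetoCount n (d n) ω}
end

section
/- If (d_n) is a sequence of integers with d_n ≥ 2 for large n and d_n − (e log n − (1/2) log log n) → −∞, then (log n)^{d_n−1}/(d_n−1)! → ∞; if instead d_n − (e log n − (1/2) log log n) → +∞, then (log n)^{d_n−1}/(d_n−1)! → 0. -/
open MeasureTheory ProbabilityTheory Filter Real Finset
open scoped ENNReal

open scoped Topology
section AuxStirling


lemma stirling_fac_eq (k : ℕ) (hk : 1 ≤ k) :
    (k.factorial : ℝ) = Stirling.stirlingSeq k *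
      (Real.sqrt (2 * k) * ((k : ℝ) / Real.exp 1) ^ k) := by
  have hk0 : (0 : ℝ) < k := by exact_mod_cast hk
  rw [Stirling.stirlingSeq, div_mul_cancel₀]
  positivity

lemma stirling_seq_le (k : ℕ) (hk : 1 ≤ k) :
    Stirling.stirlingSeq k ≤ Real.exp 1 / Real.sqrt 2 := by
  have h := Stirling.stirlingSeq'_antitone (Nat.zero_le (k - 1))
  simp only [Function.comp_apply, Nat.succ_eq_add_one, Nat.sub_add_cancel hk,
    Nat.zero_add] at h
  simpa [Stirling.stirlingSeq_one] using h

lemma one_le_stirling_seq (k : ℕ) (hk : 1 ≤ k) : 1 ≤ Stirling.stirlingSeq k := by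
  have h := Stirling.stirlingSeq'_antitone.le_of_tendsto
      (Stirling.tendsto_stirlingSeq_sqrt_pi.comp (tendsto_add_atTop_nat 1)) (k - 1)
  simp only [Function.comp_apply, Nat.succ_eq_add_one, Nat.sub_add_cancel hk] at h
  have hπ : (1 : ℝ) ≤ Real.sqrt π := by
    rw [Real.one_le_sqrt]
    linarith [Real.pi_gt_three]
  linarith

lemma log_factorial_le (k : ℕ) (hk : 1 ≤ k) :
    Real.log k.factorial ≤ k * Real.log k - k + (1/2) * Real.log k + 1 := by
  have hk0 : (0 : ℝ) < k := by exact_mod_cast hk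
  have hb : (0 : ℝ) < Real.sqrt (2 * k) * ((k : ℝ) / Real.exp 1) ^ k := by positivity
  have h1 : (k.factorial : ℝ) ≤ (Real.exp 1 / Real.sqrt 2) *
      (Real.sqrt (2 * k) * ((k : ℝ) / Real.exp 1) ^ k) := by
    rw [stirling_fac_eq k hk]
    exact mul_le_mul_of_nonneg_right (stirling_seq_le k hk) hb.le
  have h2 : (Real.exp 1 / Real.sqrt 2) * (Real.sqrt (2 * k) * ((k : ℝ) / Real.exp 1) ^ k)
      = Real.exp 1 * (Real.sqrt k * ((k : ℝ) / Real.exp 1) ^ k) := by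
    rw [show (2 * k : ℝ) = 2 * (k : ℝ) by push_cast; ring,
      Real.sqrt_mul (by norm_num : (0:ℝ) ≤ 2)]
    have h2' : Real.sqrt 2 ≠ 0 := by positivity
    field_simp
  rw [h2] at h1
  have h3 : Real.log (k.factorial : ℝ) ≤
      Real.log (Real.exp 1 * (Real.sqrt k * ((k : ℝ) / Real.exp 1) ^ k)) :=
    Real.log_le_log (by positivity) h1
  rw [Real.log_mul (Real.exp_ne_zero 1) (by positivity), Real.log_exp,
    Real.log_mul (by positivity) (by positivity), Real.log_sqrt hk0.le,
    Real.log_pow, Real.log_div (ne_of_gt hk0) (Real.exp_ne_zero 1), Real.log_exp] at h3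
  push_cast at h3 ⊢
  linarith

lemma le_log_factorial (k : ℕ) (hk : 1 ≤ k) :
    k * Real.log k - k + (1/2) * Real.log k ≤ Real.log k.factorial := by
  have hk0 : (0 : ℝ) < k := by exact_mod_cast hk
  have hx : (0 : ℝ) < ((k : ℝ) / Real.exp 1) ^ k := by positivity
  have h1 : Real.sqrt k * ((k : ℝ) / Real.exp 1) ^ k ≤ (k.factorial : ℝ) := by
    rw [stirling_fac_eq k hk]
    have hs : Real.sqrt k ≤ Real.sqrt (2 * k) := Real.sqrt_le_sqrt (by push_cast; linarith)
    have h2 := mul_le_mul_of_nonneg_right hs hx.le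
    have h3 : Real.sqrt (2 * k) * ((k : ℝ) / Real.exp 1) ^ k ≤
        Stirling.stirlingSeq k * (Real.sqrt (2 * k) * ((k : ℝ) / Real.exp 1) ^ k) :=
      le_mul_of_one_le_left (by positivity) (one_le_stirling_seq k hk)
    linarith
  have h3 : Real.log (Real.sqrt k * ((k : ℝ) / Real.exp 1) ^ k) ≤
      Real.log (k.factorial : ℝ) := Real.log_le_log (by positivity) h1
  rw [Real.log_mul (by positivity) (by positivity), Real.log_sqrt hk0.le,
    Real.log_pow, Real.log_div (ne_of_gt hk0) (Real.exp_ne_zero 1), Real.log_exp] at h3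
  linarith

lemma core1 (L t : ℝ) (k : ℕ) (hk : 1 ≤ k) (hL : 1 ≤ L) (ht : 0 ≤ t)
    (hub : (k : ℝ) + 1 + t + (1/2) * Real.log L ≤ Real.exp 1 * L) :
    min (min ((1/4) * Real.log L) (Real.sqrt L - (1/2) * Real.log L - 3)) (t - 2)
      ≤ (k : ℝ) * Real.log L - Real.log k.factorial := by
  have hK1 : (1 : ℝ) ≤ k := by exact_mod_cast hk
  have hK0 : (0 : ℝ) < k := lt_of_lt_of_le one_pos hK1
  have hL0 : (0 : ℝ) < L := lt_of_lt_of_le one_pos hL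
  have hlogL : 0 ≤ Real.log L := Real.log_nonneg hL
  have hE1 : (2 : ℝ) ≤ Real.exp 1 := by linarith [Real.exp_one_gt_d9]
  have hE0 : 0 < Real.exp 1 * L := by positivity
  have hfac := log_factorial_le k hk
  have hsL : Real.sqrt L * Real.sqrt L = L := Real.mul_self_sqrt hL0.le
  have hsL1 : 1 ≤ Real.sqrt L := Real.one_le_sqrt.mpr hL
  rcases le_or_gt (k : ℝ) (Real.sqrt L) with hA | hB
  · -- small k
    have hlogk_le : Real.log k ≤ (1/2) * Real.log L := by
      have h := Real.log_le_log hK0 hA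
      rw [Real.log_sqrt hL0.le] at h
      linarith
    have hlogk_nn : 0 ≤ Real.log k := Real.log_nonneg hK1
    have hmain : (1/4) * Real.log L ≤ (k : ℝ) * Real.log L - Real.log k.factorial := by
      nlinarith [mul_le_mul_of_nonneg_left hlogk_le hK0.le,
        mul_nonneg (sub_nonneg.mpr hK1) hlogL]
    exact le_trans ((min_le_left _ _).trans (min_le_left _ _)) hmain
  · have hKE : (k : ℝ) ≤ Real.exp 1 * L - 1 := by linarith
    have hxpos : 0 < (k : ℝ) / (Real.exp 1 * L) := by positivity
    have hlogr := Real.log_le_sub_one_of_pos hxpos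
    rw [Real.log_div (ne_of_gt hK0) (ne_of_gt hE0),
      Real.log_mul (Real.exp_ne_zero 1) (ne_of_gt hL0), Real.log_exp] at hlogr
    -- hlogr : log k - (1 + log L) ≤ k/(e*L) - 1
    have hc : (k : ℝ) / (Real.exp 1 * L) * (Real.exp 1 * L) = (k : ℝ) :=
      div_mul_cancel₀ _ (ne_of_gt hE0)
    have hkey : (k : ℝ) * (Real.exp 1 * L - (k : ℝ)) / (Real.exp 1 * L) ≤
        (k : ℝ) + (k : ℝ) * Real.log L - (k : ℝ) * Real.log k := by
      rw [div_le_iff₀ hE0]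
      nlinarith [mul_le_mul_of_nonneg_right
        (mul_le_mul_of_nonneg_left hlogr hK0.le) hE0.le]
    have hlogk_le : Real.log k ≤ 1 + Real.log L := by
      have hd1 : (k : ℝ) / (Real.exp 1 * L) ≤ 1 := (div_le_one hE0).mpr (by linarith)
      linarith
    rcases le_or_gt (k : ℝ) (Real.exp 1 * L - Real.sqrt L) with hB' | hC
    · -- middle range
      have hq : Real.sqrt L - 1 ≤ (k : ℝ) * (Real.exp 1 * L - (k : ℝ)) / (Real.exp 1 * L) := by
        rw [le_div_iff₀ hE0]
        nlinarith [hB.le, hB', hsL, hsL1, hE1, hL0.le]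
      have hmain : Real.sqrt L - (1/2) * Real.log L - 3 ≤
          (k : ℝ) * Real.log L - Real.log k.factorial := by
        linarith
      exact le_trans ((min_le_left _ _).trans (min_le_right _ _)) hmain
    · -- near the top
      have hu1 : Real.exp 1 * L - (k : ℝ) < Real.sqrt L := by linarith
      have hu0 : 1 + t + (1/2) * Real.log L ≤ Real.exp 1 * L - (k : ℝ) := by linarith
      have hq : (Real.exp 1 * L - (k : ℝ)) - 1 ≤
          (k : ℝ) * (Real.exp 1 * L - (k : ℝ)) / (Real.exp 1 * L) := by
        rw [le_div_iff₀ hE0]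
        nlinarith [hu1, hu0, ht, hlogL, hsL, hE1, hL0.le]
      have hmain : t - 2 ≤ (k : ℝ) * Real.log L - Real.log k.factorial := by
        linarith
      exact le_trans (min_le_right _ _) hmain

lemma core2 (L s : ℝ) (k : ℕ) (hk : 1 ≤ k) (hL : 1 ≤ L) (hs : 2 ≤ s)
    (hlb : Real.exp 1 * L - (1/2) * Real.log L + s - 1 ≤ (k : ℝ)) :
    (k : ℝ) * Real.log L - Real.log k.factorial ≤
      max (-(1/2) * Real.log (Real.exp 1 * L)) (1 - s) := by
  have hK1 : (1 : ℝ) ≤ k := by exact_mod_cast hk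
  have hK0 : (0 : ℝ) < k := lt_of_lt_of_le one_pos hK1
  have hL0 : (0 : ℝ) < L := lt_of_lt_of_le one_pos hL
  have hlogL : 0 ≤ Real.log L := Real.log_nonneg hL
  have hE1 : (2 : ℝ) ≤ Real.exp 1 := by linarith [Real.exp_one_gt_d9]
  have hE0 : 0 < Real.exp 1 * L := by positivity
  have hfac := le_log_factorial k hk
  have hlogE : Real.log (Real.exp 1 * L) = 1 + Real.log L := by
    rw [Real.log_mul (Real.exp_ne_zero 1) (ne_of_gt hL0), Real.log_exp]
  have hxpos : 0 < Real.exp 1 * L / (k : ℝ) := by positivity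
  have hlogr := Real.log_le_sub_one_of_pos hxpos
  rw [Real.log_div (ne_of_gt hE0) (ne_of_gt hK0),
    Real.log_mul (Real.exp_ne_zero 1) (ne_of_gt hL0), Real.log_exp] at hlogr
  -- hlogr : 1 + log L - log k ≤ e*L/k - 1
  have hc : (k : ℝ) * (Real.exp 1 * L / (k : ℝ)) = Real.exp 1 * L := by
    field_simp
  have hkey : (k : ℝ) + (k : ℝ) * Real.log L - (k : ℝ) * Real.log k ≤
      Real.exp 1 * L - (k : ℝ) := by
    nlinarith [mul_le_mul_of_nonneg_left hlogr hK0.le]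
  rcases le_or_gt (Real.exp 1 * L) (k : ℝ) with h1 | h1
  · have hlogk_ge : Real.log (Real.exp 1 * L) ≤ Real.log k := Real.log_le_log hE0 h1
    refine le_trans ?_ (le_max_left _ _)
    linarith
  · have hKL : L ≤ (k : ℝ) := by
      nlinarith [Real.log_le_sub_one_of_pos hL0]
    have hlogk_geL : Real.log L ≤ Real.log k := Real.log_le_log hL0 hKL
    refine le_trans ?_ (le_max_right _ _)
    linarith

lemma my_tendsto_sqrt_atTop : Tendsto Real.sqrt atTop atTop := by
  refine (tendsto_rpow_atTop (by norm_num : (0:ℝ) < 1/2)).congr' ?_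
  filter_upwards [eventually_ge_atTop (0:ℝ)] with x hx
  exact (Real.sqrt_eq_rpow x).symm

lemma my_tendsto_sqrt_sub_log :
    Tendsto (fun x : ℝ => Real.sqrt x - (1/2) * Real.log x - 3) atTop atTop := by
  have h3 : (fun x => Real.log (Real.sqrt x)) =o[atTop] Real.sqrt :=
    Real.isLittleO_log_id_atTop.comp_tendsto my_tendsto_sqrt_atTop
  have h4 := h3.def (by norm_num : (0:ℝ) < 1/4)
  have hbase : Tendsto (fun x : ℝ => (1/2) * Real.sqrt x - 3) atTop atTop :=
    tendsto_atTop_add_const_right atTop (-3)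
      (my_tendsto_sqrt_atTop.const_mul_atTop (by norm_num))
  refine tendsto_atTop_mono' atTop ?_ hbase
  filter_upwards [h4, eventually_ge_atTop (1:ℝ)] with x h hx1
  have hx0 : (0:ℝ) ≤ x := by linarith
  have hs1 : 1 ≤ Real.sqrt x := Real.one_le_sqrt.mpr hx1
  have hlog0 : 0 ≤ Real.log (Real.sqrt x) := Real.log_nonneg hs1
  rw [Real.norm_eq_abs, Real.norm_eq_abs, abs_of_nonneg hlog0,
    abs_of_nonneg (by linarith : (0:ℝ) ≤ Real.sqrt x), Real.log_sqrt hx0] at h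
  linarith

end AuxStirling

theorem stirling_one_sided (d : ℕ → ℕ) :
    ((∀ᶠ n in atTop, 2 ≤ d n) →
      Tendsto
        (fun n : ℕ => (d n : ℝ) - (Real.exp 1 * Real.log n - 1 / 2 * Real.log (Real.log n)))
        atTop atBot →
      Tendsto (fun n : ℕ => (Real.log n) ^ (d n - 1) / (d n - 1).factorial) atTop atTop) ∧
    (Tendsto
        (fun n : ℕ => (d n : ℝ) - (Real.exp 1 * Real.log n - 1 / 2 * Real.log (Real.log n)))
        atTop atTop →
      Tendsto (fun n : ℕ => (Real.log n) ^ (d n - 1) / (d n - 1).factorial) atTop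
        (nhds 0)) := by
  have hlog : Tendsto (fun n : ℕ => Real.log n) atTop atTop :=
    Real.tendsto_log_atTop.comp tendsto_natCast_atTop_atTop
  have hloglog : Tendsto (fun n : ℕ => Real.log (Real.log n)) atTop atTop :=
    Real.tendsto_log_atTop.comp hlog
  constructor
  · intro hd hT
    have key : Tendsto (fun n : ℕ => ((d n - 1 : ℕ) : ℝ) * Real.log (Real.log n)
        - Real.log ((d n - 1).factorial)) atTop atTop := by
      rw [tendsto_atTop]
      intro b
      have e1 := hT.eventually (eventually_le_atBot (-(|b| + 5)))
      have e2 := hlog.eventually_ge_atTop 1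
      have e3 := hloglog.eventually_ge_atTop (4 * b)
      have e4 := (my_tendsto_sqrt_sub_log.comp hlog).eventually_ge_atTop b
      filter_upwards [hd, e1, e2, e3, e4] with n h2d h1 hL1 h3 h4
      simp only [Function.comp_apply] at h4
      have hk1 : 1 ≤ d n - 1 := by omega
      have hcast : ((d n - 1 : ℕ) : ℝ) = (d n : ℝ) - 1 := by
        rw [Nat.cast_sub (by omega : 1 ≤ d n), Nat.cast_one]
      have hub : ((d n - 1 : ℕ) : ℝ) + 1 + (|b| + 4) + (1/2) * Real.log (Real.log n)
          ≤ Real.exp 1 * Real.log n := by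
        rw [hcast]; linarith
      have hcore := core1 (Real.log n) (|b| + 4) (d n - 1) hk1 hL1 (by positivity) hub
      refine le_trans ?_ hcore
      simp only [le_min_iff]
      exact ⟨⟨by linarith, h4⟩, by linarith [le_abs_self b]⟩
    have heq : (fun n : ℕ => Real.exp (((d n - 1 : ℕ) : ℝ) * Real.log (Real.log n)
        - Real.log ((d n - 1).factorial))) =ᶠ[atTop]
        (fun n : ℕ => (Real.log n) ^ (d n - 1) / ((d n - 1).factorial : ℝ)) := by
      filter_upwards [hlog.eventually_ge_atTop 1] with n hL1
      have hL0 : (0:ℝ) < Real.log n := lt_of_lt_of_le one_pos hL1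
      have hfacpos : (0:ℝ) < ((d n - 1).factorial : ℝ) := by
        exact_mod_cast (d n - 1).factorial_pos
      rw [Real.exp_sub, Real.exp_nat_mul, Real.exp_log hL0, Real.exp_log hfacpos]
    exact Tendsto.congr' heq (Real.tendsto_exp_atTop.comp key)
  · intro hT
    have hg0 : Tendsto (fun n : ℕ =>
        Real.exp (-(1/2) * Real.log (Real.exp 1 * Real.log n))
        + Real.exp (1 - ((d n : ℝ) - (Real.exp 1 * Real.log n
            - 1 / 2 * Real.log (Real.log n))))) atTop (𝓝 0) := by
      have i1 : Tendsto (fun n : ℕ => -(1/2) * Real.log (Real.exp 1 * Real.log n))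
          atTop atBot := by
        rw [tendsto_atBot]
        intro b
        have ht : Tendsto (fun n : ℕ => Real.log (Real.exp 1 * Real.log n)) atTop atTop :=
          Real.tendsto_log_atTop.comp (hlog.const_mul_atTop (Real.exp_pos 1))
        filter_upwards [ht.eventually_ge_atTop (-2 * b)] with n hn
        linarith
      have i2 : Tendsto (fun n : ℕ => 1 - ((d n : ℝ) - (Real.exp 1 * Real.log n
          - 1 / 2 * Real.log (Real.log n)))) atTop atBot := by
        rw [tendsto_atBot]
        intro b
        filter_upwards [hT.eventually_ge_atTop (1 - b)] with n hn
        linarith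
      have := (Real.tendsto_exp_atBot.comp i1).add (Real.tendsto_exp_atBot.comp i2)
      simpa using this
    refine squeeze_zero' ?_ ?_ hg0
    · filter_upwards [hlog.eventually_ge_atTop 1] with n hL1
      exact div_nonneg (pow_nonneg (by linarith) _) (Nat.cast_nonneg _)
    · filter_upwards [hlog.eventually_ge_atTop 1, hT.eventually_ge_atTop 2] with n hL1 hs2
      have hL0 : (0:ℝ) < Real.log n := lt_of_lt_of_le one_pos hL1
      have hE1 : (2:ℝ) ≤ Real.exp 1 := by linarith [Real.exp_one_gt_d9]
      have hX : Real.log (Real.log n) ≤ Real.log n - 1 :=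
        Real.log_le_sub_one_of_pos hL0
      have hXnn : 0 ≤ Real.log (Real.log n) := Real.log_nonneg hL1
      have hd2 : 2 ≤ d n := by
        have h2r : (2:ℝ) ≤ (d n : ℝ) := by nlinarith
        exact_mod_cast h2r
      have hk1 : 1 ≤ d n - 1 := by omega
      have hcast : ((d n - 1 : ℕ) : ℝ) = (d n : ℝ) - 1 := by
        rw [Nat.cast_sub (by omega : 1 ≤ d n), Nat.cast_one]
      have hlb : Real.exp 1 * Real.log n - (1/2) * Real.log (Real.log n)
          + ((d n : ℝ) - (Real.exp 1 * Real.log n - 1 / 2 * Real.log (Real.log n))) - 1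
          ≤ ((d n - 1 : ℕ) : ℝ) := by
        rw [hcast]; ring_nf; linarith
      have hcore := core2 (Real.log n)
        ((d n : ℝ) - (Real.exp 1 * Real.log n - 1 / 2 * Real.log (Real.log n)))
        (d n - 1) hk1 hL1 hs2 hlb
      have hfacpos : (0:ℝ) < ((d n - 1).factorial : ℝ) := by
        exact_mod_cast (d n - 1).factorial_pos
      have hexpr : (Real.log n) ^ (d n - 1) / ((d n - 1).factorial : ℝ)
          = Real.exp (((d n - 1 : ℕ) : ℝ) * Real.log (Real.log n)
            - Real.log ((d n - 1).factorial)) := by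
        rw [Real.exp_sub, Real.exp_nat_mul, Real.exp_log hL0, Real.exp_log hfacpos]
      rw [hexpr]
      set a := -(1/2) * Real.log (Real.exp 1 * Real.log n) with ha
      set c := 1 - ((d n : ℝ) - (Real.exp 1 * Real.log n
        - 1 / 2 * Real.log (Real.log n))) with hc
      have h1 : Real.exp (((d n - 1 : ℕ) : ℝ) * Real.log (Real.log n)
          - Real.log ((d n - 1).factorial)) ≤ Real.exp (max a c) := by
        apply Real.exp_le_exp.mpr
        refine le_trans hcore ?_
        apply max_le_max le_rfl
        linarith
      have h2 : Real.exp (max a c) ≤ Real.exp a + Real.exp c := by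
        rcases le_total a c with h | h
        · rw [max_eq_right h]; linarith [Real.exp_pos a]
        · rw [max_eq_left h]; linarith [Real.exp_pos c]
      linarith
end
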